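/- Fix k ≥ 1. In the ring B^(k)[t] ⊗ ℚ the relation b̃^1_k · b^1_k + 2·Σ_{r=1}^k (-1)^r · a^1_{k+r} · a^1_{k-r} = 0 holds, where b^1_k := b_k + Σ_{j=1}^k c_{k-j}·h^1_j(-t), b̃^1_k := b̃_k + Σ_{j=1}^k c_{k-j}·h^1_j(-t), a^1_p := (1/2)c_p + Σ_{j=1}^p c_{p-j}·h^1_j(-t), and h^1_j(-t) = (-t_1)^j. -/

import Mathlib

/-!
The ring `B^(k)[t] ⊗ ℚ`: we work in `RB = ℚ[b̃_k, b_1, b_2, …, t_1, t_2, …]`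
(the variable `Sum.inl 0` is `b̃_k`, `Sum.inl p` for `p ≥ 1` is `b_p`, and
`Sum.inr i` for `i ≥ 1` is `t_i`) modulo the ideal `J^(k)`.
-/

noncomputable section
open MvPolynomial Finset
open scoped Classical

abbrev RB : Type := MvPolynomial (ℕ ⊕ ℕ) ℚ

/-- The variable `t_i`. -/
def tv (i : ℕ) : RB := X (Sum.inr i)

/-- The variable `b̃_k`. -/
def btil : RB := X (Sum.inl 0)

/-- `b_p`, with `b_0 = 1` and `b_p = 0` for `p < 0`. -/
def bB (p : ℤ) : RB := if p < 0 then 0 else if p = 0 then 1 else X (Sum.inl p.toNat)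

/-- `c_p`: equal to `b_p` for `p < k`, to `b_k + b̃_k` for `p = k`, and to `2b_p` for `p > k`. -/
def cB (k : ℕ) (p : ℤ) : RB :=
  if p < (k : ℤ) then bB p
  else if p = (k : ℤ) then bB k + btil
  else 2 * bB p

/-- The generators of the ideal `J^(k)`. -/
def Jset (k : ℕ) : Set RB :=
  {x | ∃ p : ℕ, k < p ∧
      x = bB p * bB p +
        ∑ i ∈ Finset.Icc 1 p, (-1 : RB) ^ i * bB ((p : ℤ) + i) * cB k ((p : ℤ) - i)} ∪
  {bB k * btil + ∑ i ∈ Finset.Icc 1 k, (-1 : RB) ^ i * bB ((k : ℤ) + i) * bB ((k : ℤ) - i)}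

/-- The ideal `J^(k)`. -/
def JQ (k : ℕ) : Ideal RB := Ideal.span (Jset k)

/-- `h^1_j(-t) = (-t_1)^j`. -/
def h1 (j : ℕ) : RB := (-tv 1) ^ j

/-- `b^1_k := b_k + Σ_{j=1}^k c_{k-j}(-t_1)^j`. -/
def bk1 (k : ℕ) : RB := bB k + ∑ j ∈ Finset.Icc 1 k, cB k ((k : ℤ) - j) * h1 j

/-- `b̃^1_k := b̃_k + Σ_{j=1}^k c_{k-j}(-t_1)^j`. -/
def btk1 (k : ℕ) : RB := btil + ∑ j ∈ Finset.Icc 1 k, cB k ((k : ℤ) - j) * h1 j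

/-- `a^1_p := (1/2)c_p + Σ_{j=1}^p c_{p-j}(-t_1)^j`. -/
def a1 (k : ℕ) (p : ℤ) : RB :=
  C (1/2 : ℚ) * cB k p + ∑ j ∈ Finset.Icc 1 p.toNat, cB k (p - j) * h1 j

/-!
Write `a_p = c_p / 2` and `s = -t_1`. Unfolding the definition of `a^1` gives
`a^1_{p+1} - s a^1_p = a_{p+1} + s a_p`, i.e. `(1 - sX) A^1(X) = (1 + sX) A(X)` for the generating
series. Since `1 - s²X²` is invertible, `A^1(X) A^1(-X) = A(X) A(-X)`, and the coefficient of `X^{2k}`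
shows that `a_k² + 2 Σ_{r=1}^k (-1)^r a_{k+r} a_{k-r}` does not change when `a` is replaced by `a^1`.
With `S = Σ_{j=1}^k c_{k-j} s^j` we have `a^1_k = a_k + S`, `b̃^1_k = b̃_k + S`, `b^1_k = b_k + S`, so
`b̃^1_k b^1_k - (a^1_k)² = b̃_k b_k - a_k²` and the relation is exactly the generator
`b_k b̃_k + Σ_{r=1}^k (-1)^r b_{k+r} b_{k-r}` of `J^(k)`.
-/

theorem Finset.sum_Icc_one_eq_sum_range {M : Type*} [AddCommMonoid M] (h : ℕ → M) (k : ℕ) :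
    ∑ r ∈ Icc 1 k, h r = ∑ j ∈ range k, h (j + 1) := by
  rw [range_eq_Ico, sum_Ico_add' h 0 k 1, zero_add, Finset.Ico_add_one_right_eq_Icc]

section CentralSum

variable {R : Type*} [CommRing R]

def centralSum (f : ℕ → R) (k : ℕ) : R :=
  f k * f k + 2 * ∑ r ∈ Icc 1 k, (-1) ^ r * f (k + r) * f (k - r)

namespace PowerSeries

theorem evalNegHom_C (s : R) : evalNegHom (C s) = C s := by
  ext n
  rcases n with _ | n <;> simp [evalNegHom, coeff_rescale, coeff_C]

theorem coeff_evalNegHom (n : ℕ) (F : R⟦X⟧) : coeff n (evalNegHom F) = (-1) ^ n * coeff n F :=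
  coeff_rescale F (-1) n

theorem mul_evalNegHom_eq_of_one_sub_mul_eq {s : R} {F G : R⟦X⟧}
    (h : (1 - C s * X) * F = (1 + C s * X) * G) : F * evalNegHom F = G * evalNegHom G := by
  have hneg : (1 + C s * X) * evalNegHom F = (1 - C s * X) * evalNegHom G := by
    simpa [evalNegHom_X, evalNegHom_C, sub_eq_add_neg] using congrArg evalNegHom h
  have hunit : IsUnit ((1 - C s * X) * (1 + C s * X)) := isUnit_iff_constantCoeff.mpr (by simp)
  apply hunit.mul_left_cancel
  calc (1 - C s * X) * (1 + C s * X) * (F * evalNegHom F)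
      = ((1 - C s * X) * F) * ((1 + C s * X) * evalNegHom F) := by ring
    _ = ((1 + C s * X) * G) * ((1 - C s * X) * evalNegHom G) := by rw [h, hneg]
    _ = (1 - C s * X) * (1 + C s * X) * (G * evalNegHom G) := by ring

theorem coeff_two_mul_mk_mul_evalNegHom (f : ℕ → R) (k : ℕ) :
    coeff (2 * k) (mk f * evalNegHom (mk f)) = (-1) ^ k * centralSum f k := by
  set t : ℕ → R := fun i => (-1) ^ (2 * k - i) * f i * f (2 * k - i)
  have ht : ∀ r ≤ k, t (k - r) = t (k + r) := by
    intro r hr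
    have hsign : (-1 : R) ^ (k + r) = (-1) ^ (k - r) := by
      rw [show k + r = k - r + 2 * r by omega, pow_add, pow_mul, neg_one_sq, one_pow, mul_one]
    simp only [t, show 2 * k - (k - r) = k + r by omega, show 2 * k - (k + r) = k - r by omega,
      hsign]
    ring
  have hsplit : ∑ i ∈ range (2 * k + 1), t i = t k + ∑ r ∈ Icc 1 k, (t (k - r) + t (k + r)) := by
    rw [show 2 * k + 1 = k + (k + 1) by omega, sum_range_add, sum_range_succ', ← sum_range_reflect,
      sum_Icc_one_eq_sum_range, sum_add_distrib]
    simp only [show ∀ j, k - 1 - j = k - (j + 1) by omega, add_zero]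
    ring
  calc coeff (2 * k) (mk f * evalNegHom (mk f))
      = ∑ i ∈ range (2 * k + 1), t i := by
        rw [coeff_mul, Nat.sum_antidiagonal_eq_sum_range_succ_mk]
        refine sum_congr rfl fun i _ => ?_
        simp only [coeff_evalNegHom, coeff_mk, t]
        ring
    _ = t k + ∑ r ∈ Icc 1 k, 2 * t (k - r) := by
        rw [hsplit]
        refine congrArg _ (sum_congr rfl fun r hr => ?_)
        rw [← ht r (mem_Icc.mp hr).2, two_mul]
    _ = (-1) ^ k * centralSum f k := by
        rw [centralSum, mul_add, mul_sum, mul_sum]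
        congr 1
        · simp only [t, Nat.two_mul, Nat.add_sub_cancel]
          ring
        · refine sum_congr rfl fun r hr => ?_
          simp only [t, show 2 * k - (k - r) = k + r by have := (mem_Icc.mp hr).2; omega]
          ring

theorem one_sub_C_mul_X_mul_mk_eq {s : R} {f g : ℕ → R} (h0 : f 0 = g 0)
    (hsucc : ∀ n, f (n + 1) - s * f n = g (n + 1) + s * g n) :
    (1 - C s * X) * mk f = (1 + C s * X) * mk g := by
  ext n
  rcases n with _ | n
  · simp [h0]
  · simpa [sub_mul, add_mul, mul_assoc, coeff_succ_X_mul] using hsucc n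

end PowerSeries

theorem centralSum_eq_of_recurrence {s : R} {f g : ℕ → R} (h0 : f 0 = g 0)
    (hsucc : ∀ n, f (n + 1) - s * f n = g (n + 1) + s * g n) (k : ℕ) :
    centralSum f k = centralSum g k := by
  have hcoeff := congrArg (PowerSeries.coeff (2 * k))
    (PowerSeries.mul_evalNegHom_eq_of_one_sub_mul_eq
      (PowerSeries.one_sub_C_mul_X_mul_mk_eq h0 hsucc))
  rw [PowerSeries.coeff_two_mul_mk_mul_evalNegHom,
    PowerSeries.coeff_two_mul_mk_mul_evalNegHom] at hcoeff
  exact ((isUnit_neg_one (α := R)).pow k).mul_left_cancel hcoeff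

end CentralSum

theorem C_half_mul_two : C (1 / 2 : ℚ) * (2 : RB) = 1 := by
  rw [← map_ofNat C 2, ← map_mul]; norm_num

theorem cB_of_lt {k : ℕ} {p : ℤ} (h : p < k) : cB k p = bB p := if_pos h

theorem cB_self (k : ℕ) : cB k k = bB k + btil := by
  rw [cB, if_neg (lt_irrefl _), if_pos rfl]

theorem cB_of_gt {k : ℕ} {p : ℤ} (h : k < p) : cB k p = 2 * bB p := by
  rw [cB, if_neg (by omega), if_neg (by omega)]

theorem a1_natCast (k n : ℕ) :
    a1 k n = C (1 / 2 : ℚ) * cB k n + ∑ j ∈ Icc 1 n, cB k (n - j) * h1 j := by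
  rw [a1, Int.toNat_natCast]

theorem a1_succ (k n : ℕ) :
    a1 k (n + 1 : ℕ) - (-tv 1) * a1 k n
      = C (1 / 2 : ℚ) * cB k (n + 1 : ℕ) + (-tv 1) * (C (1 / 2 : ℚ) * cB k n) := by
  have hshift : ∑ j ∈ Icc 1 (n + 1), cB k ((n + 1 : ℕ) - j) * h1 j
      = cB k n * h1 1 + (-tv 1) * ∑ j ∈ Icc 1 n, cB k (n - j) * h1 j := by
    rw [sum_Icc_one_eq_sum_range, sum_range_succ', sum_Icc_one_eq_sum_range, mul_sum, add_comm,
      show ((n + 1 : ℕ) : ℤ) - ((0 + 1 : ℕ) : ℤ) = n by push_cast; ring]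
    refine congrArg₂ (· + ·) rfl (sum_congr rfl fun j _ => ?_)
    rw [show ((n + 1 : ℕ) : ℤ) - ((j + 1 + 1 : ℕ) : ℤ) = n - ((j + 1 : ℕ) : ℤ) by push_cast; ring,
      h1, h1, pow_succ']
    ring
  rw [a1_natCast, a1_natCast, hshift, h1, pow_one]
  linear_combination tv 1 * cB k n * C_half_mul_two

theorem centralSum_a1_eq_centralSum_half_cB (k : ℕ) :
    centralSum (fun n : ℕ => a1 k n) k = centralSum (fun n : ℕ => C (1 / 2 : ℚ) * cB k n) k :=
  centralSum_eq_of_recurrence (by simpa using a1_natCast k 0) (a1_succ k) k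

theorem centralSum_half_cB (k : ℕ) :
    centralSum (fun n : ℕ => C (1 / 2 : ℚ) * cB k n) k
      = (C (1 / 2 : ℚ) * (bB k + btil)) ^ 2
        + ∑ r ∈ Icc 1 k, (-1 : RB) ^ r * bB ((k : ℤ) + r) * bB ((k : ℤ) - r) := by
  rw [centralSum, cB_self, sq, mul_sum]
  refine congrArg _ (sum_congr rfl fun r hr => ?_)
  obtain ⟨hr1, hrk⟩ := mem_Icc.mp hr
  push_cast [hrk]
  rw [cB_of_gt (by omega), cB_of_lt (by omega)]
  linear_combination (1 + 2 * C (1 / 2 : ℚ)) * (-1 : RB) ^ r * bB ((k : ℤ) + r) * bB ((k : ℤ) - r)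
    * C_half_mul_two

theorem centralSum_a1 (k : ℕ) :
    centralSum (fun n : ℕ => a1 k n) k
      = (C (1 / 2 : ℚ) * (bB k + btil) + ∑ j ∈ Icc 1 k, cB k ((k : ℤ) - j) * h1 j) ^ 2
        + 2 * ∑ r ∈ Icc 1 k, (-1 : RB) ^ r * a1 k ((k : ℤ) + r) * a1 k ((k : ℤ) - r) := by
  rw [centralSum, a1_natCast k k, cB_self, sq]
  refine congrArg _ (congrArg _ (sum_congr rfl fun r hr => ?_))
  push_cast [(mem_Icc.mp hr).2]
  rfl

theorem statement15_general (k : ℕ) :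
    btk1 k * bk1 k +
      2 * ∑ r ∈ Finset.Icc 1 k, (-1 : RB) ^ r * a1 k ((k : ℤ) + r) * a1 k ((k : ℤ) - r)
    ∈ JQ k := by
  have key := centralSum_a1_eq_centralSum_half_cB k
  rw [centralSum_a1, centralSum_half_cB] at key
  have hgen : btk1 k * bk1 k +
      2 * ∑ r ∈ Finset.Icc 1 k, (-1 : RB) ^ r * a1 k ((k : ℤ) + r) * a1 k ((k : ℤ) - r)
      = bB k * btil + ∑ i ∈ Icc 1 k, (-1 : RB) ^ i * bB ((k : ℤ) + i) * bB ((k : ℤ) - i) := by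
    rw [btk1, bk1]
    linear_combination key
      - (bB k + btil) * (∑ j ∈ Icc 1 k, cB k ((k : ℤ) - j) * h1 j) * C_half_mul_two
  rw [hgen]
  exact Ideal.subset_span (Or.inr rfl)

/-- In `B^(k)[t] ⊗ ℚ` the relation
`b̃^1_k · b^1_k + 2 Σ_{r=1}^k (-1)^r a^1_{k+r} a^1_{k-r} = 0` holds. -/
theorem statement15 (k : ℕ) (hk : 1 ≤ k) :
    btk1 k * bk1 k +
      2 * ∑ r ∈ Finset.Icc 1 k, (-1 : RB) ^ r * a1 k ((k : ℤ) + r) * a1 k ((k : ℤ) - r)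
    ∈ JQ k :=
  statement15_general k
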